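/- For any finite simple graph H and n ≥ 1, π(S_n ∘ H) = π(H) + |V(H)|, where S_n is the star on n+1 vertices. -/

import Mathlib

/-- A list is a repetition if it is of the form `w ++ w` for a nonempty `w`. -/
def IsRepetition {α : Type*} (l : List α) : Prop := ∃ w : List α, w ≠ [] ∧ l = w ++ w

/-- A list is non-repetitive if no block of consecutive elements is a repetition. -/
def NonRepetitive {α : Type*} (l : List α) : Prop :=
  ∀ t : List α, t <:+: l → ¬ IsRepetition t

/-- A vertex colouring is non-repetitive if the colour sequence of every path
is not a repetition. -/
def NonRepColoring {V β : Type*} (G : SimpleGraph V) (φ : V → β) : Prop :=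
  ∀ ⦃u v : V⦄ (p : G.Walk u v), p.IsPath → ¬ IsRepetition (p.support.map φ)

/-- The Thue chromatic number: minimum number of colours of a non-repetitive colouring. -/
noncomputable def thueNumber {V : Type*} [Fintype V] (G : SimpleGraph V) : ℕ :=
  sInf {k | ∃ φ : V → Fin k, NonRepColoring G φ}

/-- The Thue choice number: least `k` such that from any lists of size at least `k`
one can choose a non-repetitive colouring. -/
noncomputable def thueChoiceNumber {V : Type*} [Fintype V] (G : SimpleGraph V) : ℕ :=
  sInf {k | ∀ L : V → Finset ℕ, (∀ v, k ≤ (L v).card) →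
    ∃ φ : V → ℕ, (∀ v, φ v ∈ L v) ∧ NonRepColoring G φ}

/-- The independence number of a graph. -/
noncomputable def indepNum {V : Type*} [Fintype V] (G : SimpleGraph V) : ℕ :=
  sSup {n | ∃ s : Finset V, (∀ a ∈ s, ∀ b ∈ s, ¬ G.Adj a b) ∧ s.card = n}

/-- The lexicographic product of two simple graphs. -/
def lexProd {V W : Type*} (G : SimpleGraph V) (H : SimpleGraph W) : SimpleGraph (V × W) where
  Adj x y := G.Adj x.1 y.1 ∨ (x.1 = y.1 ∧ H.Adj x.2 y.2)
  symm := by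
    constructor
    rintro x y (h | ⟨h1, h2⟩)
    · exact Or.inl h.symm
    · exact Or.inr ⟨h1.symm, h2.symm⟩
  loopless := by
    constructor
    rintro x (h | ⟨h1, h2⟩)
    · exact G.loopless.irrefl _ h
    · exact H.loopless.irrefl _ h2

/-! For an edge `st` of `G`, a non-repetitive colouring of `G ∘ H` is injective on the copy of `H`
over `s` or over `t`: otherwise two repeated colours, one on each side, give a path coloured `abab`.
Colours on adjacent copies are distinct, so the other copy is a non-repetitive colouring of `H`
avoiding `|V(H)|` colours, whence `π(H) + |V(H)| ≤ π(G ∘ H)` as soon as `G` has an edge.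

Conversely, if `V(G) ∖ A` is independent, colour the copies over `A` with `|A| |V(H)|` fresh
pairwise distinct colours and every other copy by an optimal colouring of `H`. Every colour of a
repetition occurs twice, so a repetitively coloured path avoids `A × V(H)`; inside the independent
set it cannot leave its copy of `H`. For the star, `A` is the centre. -/

open SimpleGraph

namespace IsRepetition

variable {α β : Type*} {l : List α}

theorem map (h : IsRepetition l) (f : α → β) : IsRepetition (l.map f) := by
  obtain ⟨w, hw, rfl⟩ := h
  exact ⟨w.map f, by simpa using hw, List.map_append⟩

theorem of_map_injective {f : α → β} (hf : Function.Injective f)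
    (h : IsRepetition (l.map f)) : IsRepetition l := by
  obtain ⟨w, hw, hl⟩ := h
  obtain ⟨l₁, l₂, rfl, h₁, h₂⟩ := List.map_eq_append_iff.mp hl
  have : l₁ = l₂ := List.map_injective_iff.mpr hf (h₁.trans h₂.symm)
  exact ⟨l₁, by rintro rfl; exact hw h₁.symm, by rw [this]⟩

theorem count_ne_one [BEq α] (h : IsRepetition l) (a : α) : l.count a ≠ 1 := by
  obtain ⟨w, -, rfl⟩ := h
  rw [List.count_append]
  omega

end IsRepetition

theorem List.Nodup.exists_ne_map_eq_of_isRepetition {α β : Type*} {l : List α} {f : α → β}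
    (hl : l.Nodup) (h : IsRepetition (l.map f)) {x : α} (hx : x ∈ l) :
    ∃ y ∈ l, y ≠ x ∧ f y = f x := by
  classical
  by_contra! hne
  refine h.count_ne_one (f x) ?_
  rw [List.count_eq_countP, List.countP_map, ← List.count_eq_one_of_mem hl hx,
    List.count_eq_countP]
  refine List.countP_congr fun y hy => ?_
  by_cases hyx : y = x
  · simp [hyx]
  · simp [hyx, hne y hy hyx]

namespace NonRepColoring

variable {V V' β γ : Type*} {G : SimpleGraph V} {G' : SimpleGraph V'} {φ : V → β}

theorem of_comp {f : β → γ} (h : NonRepColoring G (f ∘ φ)) : NonRepColoring G φ :=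
  fun _ _ p hp hrep => h p hp (by simpa [List.map_map] using hrep.map f)

theorem comp {f : β → γ} (hf : Function.Injective f) (h : NonRepColoring G φ) :
    NonRepColoring G (f ∘ φ) :=
  fun _ _ p hp hrep => h p hp (.of_map_injective hf (by simpa [List.map_map] using hrep))

theorem comp_embedding {ψ : V' → β} (h : NonRepColoring G' ψ) (e : G ↪g G') :
    NonRepColoring G (ψ ∘ e) := by
  intro _ _ p hp hrep
  refine h (p.map e.toHom) (hp.map e.injective) ?_
  simpa [Walk.support_map, List.map_map] using hrep

theorem ne_of_adj (h : NonRepColoring G φ) {u v : V} (huv : G.Adj u v) : φ u ≠ φ v := by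
  intro hφ
  exact h huv.toWalk (Walk.IsPath.of_adj huv) ⟨[φ u], by simp, by simp [hφ]⟩

end NonRepColoring

theorem nonRepColoring_of_injective {V β : Type*} (G : SimpleGraph V) {φ : V → β}
    (hφ : Function.Injective φ) : NonRepColoring G φ := fun _ _ p hp hrep => by
  obtain ⟨y, -, hne, hy⟩ :=
    hp.support_nodup.exists_ne_map_eq_of_isRepetition hrep p.start_mem_support
  exact hne (hφ hy)

section thueNumber

variable {V : Type*} [Fintype V] (G : SimpleGraph V)

theorem thueNumber_le_card {β : Type*} [Fintype β] {φ : V → β} (hφ : NonRepColoring G φ) :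
    thueNumber G ≤ Fintype.card β :=
  Nat.sInf_le ⟨_, hφ.comp (Fintype.equivFin β).injective⟩

theorem exists_nonRepColoring_thueNumber :
    ∃ φ : V → Fin (thueNumber G), NonRepColoring G φ :=
  Nat.sInf_mem (s := {k | ∃ φ : V → Fin k, NonRepColoring G φ})
    ⟨Fintype.card V, _, nonRepColoring_of_injective G (Fintype.equivFin V).injective⟩

end thueNumber

namespace lexProd

variable {V W : Type*} {G : SimpleGraph V} {H : SimpleGraph W}

theorem adj_iff {x y : V × W} :
    (lexProd G H).Adj x y ↔ G.Adj x.1 y.1 ∨ (x.1 = y.1 ∧ H.Adj x.2 y.2) := Iff.rfl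

variable (G H) in
def copy (v : V) : H ↪g lexProd G H where
  toFun := Prod.mk v
  inj' := Prod.mk_right_injective v
  map_rel_iff' := by simp [adj_iff]

theorem exists_walk_support_eq_of_isIndepSet {S : Set V} (hS : G.IsIndepSet S) {x y : V × W}
    (p : (lexProd G H).Walk x y) (hp : ∀ z ∈ p.support, z.1 ∈ S) :
    ∃ q : H.Walk x.2 y.2, p.support = q.support.map (Prod.mk x.1) := by
  induction p with
  | nil => exact ⟨.nil, rfl⟩
  | @cons a b c hab p ih =>
    simp only [Walk.support_cons, List.mem_cons, forall_eq_or_imp] at hp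
    obtain ⟨q, hq⟩ := ih hp.2
    obtain ⟨hfst, hadj⟩ := hab.resolve_left
      fun h => hS hp.1 (hp.2 b p.start_mem_support) h.ne h
    refine ⟨.cons hadj q, ?_⟩
    rw [Walk.support_cons, Walk.support_cons, hq, List.map_cons, ← hfst]

end lexProd

namespace NonRepColoring

variable {V W β : Type*} {G : SimpleGraph V} {H : SimpleGraph W} {ψ : V × W → β}

theorem injective_copy_or_injective_copy (hψ : NonRepColoring (lexProd G H) ψ) {s t : V}
    (hst : G.Adj s t) :
    Function.Injective (fun w => ψ (s, w)) ∨ Function.Injective (fun w => ψ (t, w)) := by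
  by_contra! h
  simp only [Function.not_injective_iff] at h
  obtain ⟨⟨u, u', hu, hne⟩, ⟨v, v', hv, hne'⟩⟩ := h
  have e₁ : (lexProd G H).Adj (s, u) (t, v) := Or.inl hst
  have e₂ : (lexProd G H).Adj (t, v) (s, u') := Or.inl hst.symm
  have e₃ : (lexProd G H).Adj (s, u') (t, v') := Or.inl hst
  let p := Walk.cons e₁ (.cons e₂ (.cons e₃ .nil))
  have hp : p.IsPath := by
    simp [p, Walk.isPath_def, hst.ne, hst.ne.symm, hne, hne']
  exact hψ p hp ⟨[ψ (s, u), ψ (t, v)], by simp, by simp [p, hu, hv]⟩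

theorem thueNumber_add_card_le [Fintype W] [Fintype β] (hψ : NonRepColoring (lexProd G H) ψ)
    {s t : V} (hst : G.Adj s t) : thueNumber H + Fintype.card W ≤ Fintype.card β := by
  wlog ht : Function.Injective (fun w => ψ (t, w)) generalizing s t
  · exact this hst.symm ((hψ.injective_copy_or_injective_copy hst).resolve_right ht)
  classical
  set B := Finset.univ.image (fun w => ψ (t, w))
  have hB : B.card = Fintype.card W := by simp [B, Finset.card_image_of_injective _ ht]
  have hs : ∀ w, ψ (s, w) ∈ Bᶜ := fun w => by
    simpa [B] using fun w' => (hψ.ne_of_adj (Or.inl hst : (lexProd G H).Adj (s, w) (t, w'))).symm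
  have hcopy : NonRepColoring H (fun w => (⟨ψ (s, w), hs w⟩ : ↥Bᶜ)) :=
    of_comp (f := Subtype.val) (hψ.comp_embedding (lexProd.copy G H s))
  have := thueNumber_le_card H hcopy
  rw [Fintype.card_coe, Finset.card_compl, hB] at this
  have := B.card_le_univ
  omega

end NonRepColoring

namespace lexProd

variable {V W β : Type*} [DecidableEq V] {G : SimpleGraph V} {H : SimpleGraph W}

def liftColoring (A : Finset V) (φ : W → β) (x : V × W) : β ⊕ (A × W) :=
  if h : x.1 ∈ A then .inr (⟨x.1, h⟩, x.2) else .inl (φ x.2)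

theorem nonRepColoring_liftColoring {A : Finset V} (hA : G.IsIndepSet (↑A)ᶜ) {φ : W → β}
    (hφ : NonRepColoring H φ) : NonRepColoring (lexProd G H) (liftColoring A φ) := by
  intro x y p hp hrep
  have hout : ∀ z ∈ p.support, z.1 ∉ A := by
    intro z hz hzA
    obtain ⟨z', -, hne, hz'⟩ := hp.support_nodup.exists_ne_map_eq_of_isRepetition hrep hz
    by_cases hz'A : z'.1 ∈ A
    · simp only [liftColoring, hzA, hz'A, dite_true, Sum.inr.injEq, Prod.mk.injEq,
        Subtype.mk.injEq] at hz'
      exact hne (Prod.ext hz'.1 hz'.2)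
    · simp [liftColoring, hzA, hz'A] at hz'
  obtain ⟨q, hq⟩ := exists_walk_support_eq_of_isIndepSet hA p hout
  have hqpath : q.IsPath := by
    rw [Walk.isPath_def]
    exact (hq ▸ hp.support_nodup).of_map _
  have hcol : p.support.map (liftColoring A φ) = (q.support.map φ).map Sum.inl := by
    simp [hq, liftColoring, hout x p.start_mem_support]
  exact hφ q hqpath (.of_map_injective Sum.inl_injective (hcol ▸ hrep))

end lexProd

theorem thueNumber_lexProd_le {V W : Type*} [Fintype V] [Fintype W] [DecidableEq V]
    {G : SimpleGraph V} (H : SimpleGraph W) {A : Finset V} (hA : G.IsIndepSet (↑A)ᶜ) :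
    thueNumber (lexProd G H) ≤ thueNumber H + A.card * Fintype.card W := by
  obtain ⟨φ, hφ⟩ := exists_nonRepColoring_thueNumber H
  simpa using thueNumber_le_card _ (lexProd.nonRepColoring_liftColoring hA hφ)

theorem completeBipartiteGraph_isIndepSet_compl_inl (n : ℕ) :
    (completeBipartiteGraph (Fin 1) (Fin n)).IsIndepSet
      (↑({Sum.inl 0} : Finset (Fin 1 ⊕ Fin n)))ᶜ := by
  rintro (a | a) ha (b | b) hb -
  all_goals simp_all [Fin.fin_one_eq_zero]

/-- `π(S_n ∘ H) = π(H) + |V(H)|` where `S_n = K_{1,n}`. -/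
theorem thueNumber_lexProd_star {W : Type*} [Fintype W] (H : SimpleGraph W)
    (n : ℕ) (hn : 1 ≤ n) :
    thueNumber (lexProd (completeBipartiteGraph (Fin 1) (Fin n)) H) =
      thueNumber H + Fintype.card W := by
  refine le_antisymm ?_ ?_
  · simpa using thueNumber_lexProd_le H (completeBipartiteGraph_isIndepSet_compl_inl n)
  · obtain ⟨ψ, hψ⟩ :=
      exists_nonRepColoring_thueNumber (lexProd (completeBipartiteGraph (Fin 1) (Fin n)) H)
    have hadj : (completeBipartiteGraph (Fin 1) (Fin n)).Adj (.inl 0) (.inr ⟨0, hn⟩) := by simp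
    simpa using hψ.thueNumber_add_card_le hadj
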